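/- arXiv:2107.03731 — 3 statements merged into one kernel-verified Lean document; each statement's English description precedes it below -/
import Mathlib

section
/- Let X be a Noetherian sober topological space and let V ⊆ X be a subset. Suppose that for every point x ∈ V there exists a locally closed subset L of X with x ∈ L ⊆ V, and that for every point x ∈ X \ V there exists a locally closed subset L of X with x ∈ L ⊆ X \ V. Then V is constructible, i.e. V is a finite union of locally closed subsets of X. -/
open Set TopologicalSpace

/-!
Noetherian induction on the closed set `Z` shows that `V ∩ Z` is a finite union of locally
closed sets. A reducible `Z` splits into two proper closed pieces. An irreducible `Z` has a
generic point `η`; a locally closed `L ∋ η` on which `V` is locally closed contains `U ∩ Z` for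
some open `U ∋ η`, so `V ∩ U ∩ Z` is locally closed, and the rest of `V ∩ Z` lies in the proper
closed subset `Z \ U`.
-/

section

variable {X : Type*} [TopologicalSpace X]

def IsFiniteUnionOfLocallyClosed (s : Set X) : Prop :=
  ∃ S : Finset (Set X), (∀ L ∈ S, IsLocallyClosed L) ∧ s = ⋃₀ ↑S

theorem IsLocallyClosed.isFiniteUnionOfLocallyClosed {s : Set X} (hs : IsLocallyClosed s) :
    IsFiniteUnionOfLocallyClosed s :=
  ⟨{s}, by simpa using hs, by simp⟩

theorem IsFiniteUnionOfLocallyClosed.union {s t : Set X} (hs : IsFiniteUnionOfLocallyClosed s)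
    (ht : IsFiniteUnionOfLocallyClosed t) : IsFiniteUnionOfLocallyClosed (s ∪ t) := by
  classical
  obtain ⟨S, hS, rfl⟩ := hs
  obtain ⟨T, hT, rfl⟩ := ht
  refine ⟨S ∪ T, fun L hL => ?_, by simp [sUnion_union]⟩
  rcases Finset.mem_union.mp hL with hL | hL
  exacts [hS L hL, hT L hL]

theorem IsLocallyClosed.exists_isOpen_inter_subset_of_isGenericPoint {L Z : Set X} {η : X}
    (hL : IsLocallyClosed L) (hη : IsGenericPoint η Z) (hηL : η ∈ L) :
    ∃ U, IsOpen U ∧ η ∈ U ∧ U ∩ Z ⊆ L := by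
  obtain ⟨U, C, hU, hC, rfl⟩ := hL
  have hZC : Z ⊆ C := hη.def ▸ closure_minimal (singleton_subset_iff.mpr hηL.2) hC
  exact ⟨U, hU, hηL.1, fun x hx => ⟨hx.1, hZC hx.2⟩⟩

@[elab_as_elim]
theorem TopologicalSpace.NoetherianSpace.isClosed_induction [NoetherianSpace X]
    {P : Set X → Prop} (empty : P ∅)
    (union : ∀ Z₁ Z₂, IsClosed Z₁ → IsClosed Z₂ → P Z₁ → P Z₂ → P (Z₁ ∪ Z₂))
    (irreducible : ∀ Z, IsClosed Z → IsIrreducible Z → (∀ Z', IsClosed Z' → Z' ⊂ Z → P Z') → P Z)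
    {Z : Set X} (hZ : IsClosed Z) : P Z := by
  suffices ∀ Z : Closeds X, P Z from this ⟨Z, hZ⟩
  intro Z
  induction Z using WellFoundedLT.induction with | ind Z ih => ?_
  obtain ⟨Z, hZ⟩ := Z
  change P Z
  replace ih : ∀ Z', IsClosed Z' → Z' ⊂ Z → P Z' := fun Z' hZ' hlt => ih ⟨Z', hZ'⟩ hlt
  by_cases hZirr : IsIrreducible Z
  · exact irreducible Z hZ hZirr ih
  rw [IsIrreducible, not_and_or, not_nonempty_iff_eq_empty,
    isPreirreducible_iff_isClosed_union_isClosed] at hZirr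
  push Not at hZirr
  rcases hZirr with hZe | ⟨Z₁, Z₂, hZ₁, hZ₂, hcover, hZ₁ne, hZ₂ne⟩
  · exact hZe ▸ empty
  have hsplit : Z = (Z ∩ Z₁) ∪ (Z ∩ Z₂) := by
    rw [← inter_union_distrib_left, inter_eq_left.mpr hcover]
  rw [hsplit]
  exact union _ _ (hZ.inter hZ₁) (hZ.inter hZ₂)
    (ih _ (hZ.inter hZ₁) (inter_subset_left.ssubset_of_not_subset
      fun h => hZ₁ne (h.trans inter_subset_right)))
    (ih _ (hZ.inter hZ₂) (inter_subset_left.ssubset_of_not_subset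
      fun h => hZ₂ne (h.trans inter_subset_right)))

theorem isFiniteUnionOfLocallyClosed_of_forall_exists [NoetherianSpace X] [QuasiSober X]
    {V : Set X} (hV : ∀ x, ∃ L, IsLocallyClosed L ∧ x ∈ L ∧ IsLocallyClosed (V ∩ L)) :
    IsFiniteUnionOfLocallyClosed V := by
  suffices ∀ Z, IsClosed Z → IsFiniteUnionOfLocallyClosed (V ∩ Z) by
    simpa using this univ isClosed_univ
  intro Z hZ
  refine NoetherianSpace.isClosed_induction ?_ ?_ ?_ hZ
  · simpa using isClosed_empty.isLocallyClosed.isFiniteUnionOfLocallyClosed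
  · intro Z₁ Z₂ _ _ h₁ h₂
    simpa only [inter_union_distrib_left] using h₁.union h₂
  intro Z hZ hZirr ih
  obtain ⟨η, hη⟩ := QuasiSober.sober hZirr hZ
  obtain ⟨L, hL, hηL, hVL⟩ := hV η
  obtain ⟨U, hU, hηU, hUZ⟩ := hL.exists_isOpen_inter_subset_of_isGenericPoint hη hηL
  have hsplit : V ∩ Z = V ∩ (Z \ U) ∪ V ∩ L ∩ (U ∩ Z) := by
    grind
  rw [hsplit]
  refine (ih _ (hZ.sdiff hU) (sdiff_subset.ssubset_of_not_subset fun h => ?_)).union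
    (hVL.inter (hU.isLocallyClosed.inter hZ.isLocallyClosed)).isFiniteUnionOfLocallyClosed
  exact (h hη.mem).2 hηU

end

theorem constructible_of_locallyClosed_around_points_general
    {X : Type*} [TopologicalSpace X] [TopologicalSpace.NoetherianSpace X]
    [QuasiSober X] (V : Set X)
    (hV : ∀ x ∈ V, ∃ L : Set X, IsLocallyClosed L ∧ x ∈ L ∧ L ⊆ V)
    (hVc : ∀ x ∈ Vᶜ, ∃ L : Set X, IsLocallyClosed L ∧ x ∈ L ∧ L ⊆ Vᶜ) :
    ∃ s : Finset (Set X), (∀ L ∈ s, IsLocallyClosed L) ∧ V = ⋃₀ ↑s := by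
  refine isFiniteUnionOfLocallyClosed_of_forall_exists fun x => ?_
  by_cases hx : x ∈ V
  · obtain ⟨L, hL, hxL, hLV⟩ := hV x hx
    exact ⟨L, hL, hxL, by rwa [inter_eq_right.mpr hLV]⟩
  · obtain ⟨L, hL, hxL, hLV⟩ := hVc x hx
    exact ⟨L, hL, hxL, by
      rw [(subset_compl_iff_disjoint_left.mp hLV).inter_eq]
      exact isClosed_empty.isLocallyClosed⟩

/-- Let `X` be a Noetherian sober topological space and `V ⊆ X` a subset.
If every point of `V` has a locally closed neighborhood (in the sense of containment)
inside `V`, and every point of the complement of `V` has a locally closed set containing it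
inside the complement, then `V` is constructible, i.e. a finite union of locally closed sets. -/
theorem constructible_of_locallyClosed_around_points
    {X : Type*} [TopologicalSpace X] [TopologicalSpace.NoetherianSpace X]
    [T0Space X] [QuasiSober X] (V : Set X)
    (hV : ∀ x ∈ V, ∃ L : Set X, IsLocallyClosed L ∧ x ∈ L ∧ L ⊆ V)
    (hVc : ∀ x ∈ Vᶜ, ∃ L : Set X, IsLocallyClosed L ∧ x ∈ L ∧ L ⊆ Vᶜ) :
    ∃ s : Finset (Set X), (∀ L ∈ s, IsLocallyClosed L) ∧ V = ⋃₀ ↑s :=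
  constructible_of_locallyClosed_around_points_general V hV hVc
end

section
/- Let B be a Boolean algebra and let L ⊆ B be a subset containing ⊥ and ⊤ and closed under binary meets and binary joins. Then every element x of the Boolean subalgebra of B generated by L can be written as a finite join x = ⋁_{i=1}^{n} (aᵢ ⊓ bᵢᶜ) for some n ≥ 0 and elements aᵢ, bᵢ ∈ L (the empty join being ⊥). -/
/-- The Boolean subalgebra of a Boolean algebra `B` generated by a subset `L`:
the smallest subset of `B` containing `L`, containing `⊥` and `⊤`, and closed under
binary meets, binary joins and complements. -/
inductive BooleanClosure {B : Type*} [BooleanAlgebra B] (L : Set B) : B → Prop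
  | base {x : B} : x ∈ L → BooleanClosure L x
  | bot : BooleanClosure L ⊥
  | top : BooleanClosure L ⊤
  | inf {x y : B} : BooleanClosure L x → BooleanClosure L y → BooleanClosure L (x ⊓ y)
  | sup {x y : B} : BooleanClosure L x → BooleanClosure L y → BooleanClosure L (x ⊔ y)
  | compl {x : B} : BooleanClosure L x → BooleanClosure L xᶜ

/-- Normal form predicate: `x` is a finite join of elements `p.1 ⊓ p.2ᶜ` with `p.1, p.2 ∈ L`. -/
def BCNF {B : Type*} [BooleanAlgebra B] (L : Set B) (x : B) : Prop :=
  ∃ s : Finset (B × B), (∀ p ∈ s, p.1 ∈ L ∧ p.2 ∈ L) ∧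
    x = s.sup (fun p => p.1 ⊓ p.2ᶜ)

theorem bcnf_sup {B : Type*} [BooleanAlgebra B] {L : Set B} {x y : B}
    (hx : BCNF L x) (hy : BCNF L y) : BCNF L (x ⊔ y) := by
  classical
  obtain ⟨s, hs, rfl⟩ := hx
  obtain ⟨t, ht, rfl⟩ := hy
  exact ⟨s ∪ t, fun p hp => (Finset.mem_union.1 hp).elim (hs p) (ht p),
    (Finset.sup_union).symm⟩

theorem compl_finset_sup {B : Type*} [BooleanAlgebra B] {α : Type*} (s : Finset α) (f : α → B) :
    (s.sup f)ᶜ = s.inf (fun i => (f i)ᶜ) := by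
  induction s using Finset.cons_induction with
  | empty => simp
  | cons a s ha ih => simp [ih]

/-- If `L ⊆ B` contains `⊥` and `⊤` and is closed under binary meets and
joins, then every element of the Boolean subalgebra of `B` generated by `L` is a finite join
`⋁ i, a i ⊓ (b i)ᶜ` with `a i, b i ∈ L`. -/
theorem booleanClosure_normal_form
    {B : Type*} [BooleanAlgebra B] (L : Set B)
    (hbot : (⊥ : B) ∈ L) (htop : (⊤ : B) ∈ L)
    (hinf : ∀ a ∈ L, ∀ b ∈ L, a ⊓ b ∈ L) (hsup : ∀ a ∈ L, ∀ b ∈ L, a ⊔ b ∈ L) :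
    ∀ x : B, BooleanClosure L x →
      ∃ (n : ℕ) (a b : Fin n → B), (∀ i, a i ∈ L) ∧ (∀ i, b i ∈ L) ∧
        x = Finset.univ.sup fun i => a i ⊓ (b i)ᶜ := by
  classical
  -- basic NF facts
  have nf_base : ∀ x ∈ L, BCNF L x := by
    intro x hx
    exact ⟨{(x, ⊥)}, by simp [hx, hbot], by simp⟩
  have nf_bot : BCNF L (⊥ : B) := ⟨∅, by simp, by simp⟩
  have nf_top : BCNF L (⊤ : B) := ⟨{(⊤, ⊥)}, by simp [htop, hbot], by simp⟩
  have nf_inf : ∀ x y : B, BCNF L x → BCNF L y → BCNF L (x ⊓ y) := by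
    intro x y hx hy
    obtain ⟨s, hs, rfl⟩ := hx
    obtain ⟨t, ht, rfl⟩ := hy
    refine ⟨(s ×ˢ t).image (fun q => (q.1.1 ⊓ q.2.1, q.1.2 ⊔ q.2.2)), ?_, ?_⟩
    · intro p hp
      simp only [Finset.mem_image, Finset.mem_product] at hp
      obtain ⟨q, ⟨hq1, hq2⟩, rfl⟩ := hp
      exact ⟨hinf _ (hs _ hq1).1 _ (ht _ hq2).1, hsup _ (hs _ hq1).2 _ (ht _ hq2).2⟩
    · rw [Finset.sup_image, Finset.sup_inf_sup]
      apply Finset.sup_congr rfl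
      intro q _
      simp only [Function.comp]
      rw [compl_sup]
      ac_rfl
  have nf_compl : ∀ x : B, BCNF L x → BCNF L xᶜ := by
    intro x hx
    obtain ⟨s, hs, rfl⟩ := hx
    rw [compl_finset_sup]
    induction s using Finset.cons_induction with
    | empty => simpa using nf_top
    | cons p s hp ih =>
      rw [Finset.inf_cons]
      apply nf_inf
      · -- (p.1 ⊓ p.2ᶜ)ᶜ = p.1ᶜ ⊔ p.2 = (⊤ ⊓ p.1ᶜ) ⊔ (p.2 ⊓ ⊥ᶜ)
        have hp1 := (hs p (Finset.mem_cons_self p s)).1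
        have hp2 := (hs p (Finset.mem_cons_self p s)).2
        refine ⟨insert (⊤, p.1) {(p.2, ⊥)}, ?_, ?_⟩
        · intro q hq
          rcases Finset.mem_insert.1 hq with h | h
          · subst h; exact ⟨htop, hp1⟩
          · rw [Finset.mem_singleton] at h; subst h; exact ⟨hp2, hbot⟩
        · rw [Finset.sup_insert, Finset.sup_singleton]
          simp [compl_inf, sup_comm]
      · exact ih (fun q hq => hs q (Finset.mem_cons_of_mem hq))
  -- main induction
  intro x hx
  have hnf : BCNF L x := by
    induction hx with
    | base h => exact nf_base _ h
    | bot => exact nf_bot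
    | top => exact nf_top
    | inf _ _ ih1 ih2 => exact nf_inf _ _ ih1 ih2
    | sup _ _ ih1 ih2 => exact bcnf_sup ih1 ih2
    | compl _ ih => exact nf_compl _ ih
  -- convert Finset NF to Fin NF
  obtain ⟨s, hs, rfl⟩ := hnf
  set e := s.equivFin with he
  refine ⟨s.card, fun i => ((e.symm i : B × B)).1, fun i => ((e.symm i : B × B)).2,
    fun i => (hs _ (e.symm i).2).1, fun i => (hs _ (e.symm i).2).2, ?_⟩
  calc s.sup (fun p => p.1 ⊓ p.2ᶜ)
      = s.attach.sup (fun x => (x : B × B).1 ⊓ ((x : B × B).2)ᶜ) := by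
        exact (Finset.sup_attach _ _).symm
    _ = (Finset.univ.map e.symm.toEmbedding).sup
          (fun x => (x : B × B).1 ⊓ ((x : B × B).2)ᶜ) := by
        rw [Finset.map_univ_equiv, Finset.univ_eq_attach]
    _ = Finset.univ.sup (fun i => ((e.symm i : B × B)).1 ⊓ ((e.symm i : B × B)).2ᶜ) := by
        rw [Finset.sup_map]; rfl
end

section
/- Let D be a distributive lattice, B a Boolean algebra, and f : D → B an injective bounded lattice homomorphism such that every element of B is a finite join ⋁_{i=1}^{n} (f(aᵢ) ⊓ f(bᵢ)ᶜ) with aᵢ, bᵢ ∈ D. Then for every Boolean algebra C and every bounded lattice homomorphism g : D → C there exists a unique bounded lattice homomorphism h : B → C with h ∘ f = g. (In other words, f exhibits B as the free Boolean algebra on the distributive lattice D.) -/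
/-!
Every element of `B` is a join `⋁ⱼ f cⱼ \ f dⱼ`, so `h` is forced to send it to `⋁ⱼ g cⱼ \ g dⱼ`;
the point is that this is well defined. Peeling off one term at a time with
`x \ y ≤ u \ v ⊔ w ↔ x \ (y ⊔ u) ≤ w ∧ (x ⊓ v) \ y ≤ w`, an inequality
`f a \ f b ≤ ⋁ⱼ f cⱼ \ f dⱼ` is equivalent to a finite family of inequalities `f a' ≤ f b'`
with `a', b'` lattice polynomials in `a, b, cⱼ, dⱼ`. These hold in `D` because `f` is injective,
hence after applying `g`, and the same peeling turns them back into the inequality for `g`.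
-/

open Finset Function

section GeneralizedBooleanAlgebra

variable {α : Type*} [GeneralizedBooleanAlgebra α]

theorem sdiff_inf_sdiff_eq_inf_sdiff_sup (a b c d : α) : a \ b ⊓ c \ d = (a ⊓ c) \ (b ⊔ d) := by
  rw [← inf_sdiff_assoc, sdiff_inf_right_comm, sdiff_sdiff_left]

theorem sdiff_le_sdiff_sup_iff {x y u v w : α} :
    x \ y ≤ u \ v ⊔ w ↔ x \ (y ⊔ u) ≤ w ∧ (x ⊓ v) \ y ≤ w := by
  rw [← sdiff_le_iff, sdiff_sdiff_right', sdiff_sdiff_left, sdiff_inf_right_comm, sup_le_iff]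

end GeneralizedBooleanAlgebra

theorem LatticeHom.le_of_map_le {D E : Type*} [Lattice D] [Lattice E] {φ : LatticeHom D E}
    (hφ : Injective φ) {a b : D} (h : φ a ≤ φ b) : a ≤ b := by
  rw [← inf_eq_left] at h ⊢
  exact hφ (by rwa [map_inf])

section SdiffSup

variable {D E F : Type*} [GeneralizedBooleanAlgebra E] [GeneralizedBooleanAlgebra F]

/-- The normal forms `⋁ᵢ f aᵢ ⊓ (f bᵢ)ᶜ` of the theorem are the values of `sdiffSup f`. -/
def sdiffSup (φ : D → E) (s : Finset (D × D)) : E :=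
  s.sup fun p => φ p.1 \ φ p.2

theorem sdiffSup_union [DecidableEq D] (φ : D → E) (s t : Finset (D × D)) :
    sdiffSup φ (s ∪ t) = sdiffSup φ s ⊔ sdiffSup φ t :=
  sup_union

variable [Lattice D]

theorem sdiffSup_inf_sdiffSup [DecidableEq D] (φ : LatticeHom D E) (s t : Finset (D × D)) :
    sdiffSup φ s ⊓ sdiffSup φ t =
      sdiffSup φ ((s ×ˢ t).image fun p => (p.1.1 ⊓ p.2.1, p.1.2 ⊔ p.2.2)) := by
  simp only [sdiffSup, sup_inf_sup, sup_image, comp_def, map_inf, map_sup,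
    sdiff_inf_sdiff_eq_inf_sdiff_sup]

theorem sdiff_le_sdiffSup_of_injective {φ : LatticeHom D E} (hφ : Injective φ)
    (ψ : LatticeHom D F) (s : Finset (D × D)) {a b : D} (h : φ a \ φ b ≤ sdiffSup φ s) :
    ψ a \ ψ b ≤ sdiffSup ψ s := by
  induction s using Finset.cons_induction generalizing a b with
  | empty =>
    rw [sdiffSup, sup_empty, le_bot_iff, sdiff_eq_bot_iff] at h ⊢
    exact OrderHomClass.mono ψ (LatticeHom.le_of_map_le hφ h)
  | cons p s hp ih =>
    rw [sdiffSup, sup_cons, sdiff_le_sdiff_sup_iff] at h ⊢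
    rw [← map_sup, ← map_inf] at h ⊢
    exact ⟨ih h.1, ih h.2⟩

theorem sdiffSup_le_sdiffSup_of_injective {φ : LatticeHom D E} (hφ : Injective φ)
    (ψ : LatticeHom D F) {s t : Finset (D × D)} (h : sdiffSup φ s ≤ sdiffSup φ t) :
    sdiffSup ψ s ≤ sdiffSup ψ t :=
  Finset.sup_le fun _ hp =>
    sdiff_le_sdiffSup_of_injective hφ ψ t ((le_sup (f := fun p => φ p.1 \ φ p.2) hp).trans h)

theorem sdiffSup_eq_sdiffSup_of_injective {φ : LatticeHom D E} (hφ : Injective φ)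
    (ψ : LatticeHom D F) {s t : Finset (D × D)} (h : sdiffSup φ s = sdiffSup φ t) :
    sdiffSup ψ s = sdiffSup ψ t :=
  (sdiffSup_le_sdiffSup_of_injective hφ ψ h.le).antisymm
    (sdiffSup_le_sdiffSup_of_injective hφ ψ h.ge)

variable {φ : LatticeHom D E} (hsurj : Surjective (sdiffSup φ))

noncomputable def sdiffSupLift (ψ : LatticeHom D F) (x : E) : F :=
  sdiffSup ψ (hsurj x).choose

theorem sdiffSupLift_sdiffSup (hφ : Injective φ) (ψ : LatticeHom D F) (s : Finset (D × D)) :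
    sdiffSupLift hsurj ψ (sdiffSup φ s) = sdiffSup ψ s :=
  sdiffSup_eq_sdiffSup_of_injective hφ ψ (hsurj _).choose_spec

noncomputable def sdiffSupLiftHom (hφ : Injective φ) (ψ : LatticeHom D F) : LatticeHom E F where
  toFun := sdiffSupLift hsurj ψ
  map_sup' x y := by
    classical
    obtain ⟨⟨s, rfl⟩, ⟨t, rfl⟩⟩ := And.intro (hsurj x) (hsurj y)
    simp only [← sdiffSup_union, sdiffSupLift_sdiffSup hsurj hφ]
  map_inf' x y := by
    classical
    obtain ⟨⟨s, rfl⟩, ⟨t, rfl⟩⟩ := And.intro (hsurj x) (hsurj y)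
    simp only [sdiffSup_inf_sdiffSup, sdiffSupLift_sdiffSup hsurj hφ]

theorem sdiffSupLiftHom_sdiffSup (hφ : Injective φ) (ψ : LatticeHom D F) (s : Finset (D × D)) :
    sdiffSupLiftHom hsurj hφ ψ (sdiffSup φ s) = sdiffSup ψ s :=
  sdiffSupLift_sdiffSup hsurj hφ ψ s

theorem sdiffSupLiftHom_apply_map [OrderBot D] (hφ : Injective φ) (ψ : LatticeHom D F)
    (hφ_bot : φ ⊥ = ⊥) (hψ_bot : ψ ⊥ = ⊥) (a : D) :
    sdiffSupLiftHom hsurj hφ ψ (φ a) = ψ a := by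
  have key := sdiffSupLiftHom_sdiffSup hsurj hφ ψ {(a, ⊥)}
  simpa [sdiffSup, hφ_bot, hψ_bot] using key

end SdiffSup

theorem BoundedLatticeHom.eq_of_comp_eq_of_surjective_sdiffSup {D E F : Type*} [Lattice D]
    [BoundedOrder D] [BooleanAlgebra E] [BooleanAlgebra F] {φ : BoundedLatticeHom D E}
    (hsurj : Surjective (sdiffSup φ)) {h₁ h₂ : BoundedLatticeHom E F}
    (h : h₁.comp φ = h₂.comp φ) : h₁ = h₂ := by
  have hcomp (a : D) : h₁ (φ a) = h₂ (φ a) := DFunLike.congr_fun h a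
  ext x
  obtain ⟨s, rfl⟩ := hsurj x
  simp only [sdiffSup, map_finset_sup, comp_def, map_sdiff', hcomp]

/-- Let `D` be a bounded distributive lattice, `B` a Boolean algebra and
`f : D → B` an injective bounded lattice homomorphism such that every element of `B` is a
finite join `⋁ i, f (a i) ⊓ (f (b i))ᶜ` with `a i, b i ∈ D`.  Then for every Boolean algebra
`C` and every bounded lattice homomorphism `g : D → C` there is a unique bounded lattice
homomorphism `h : B → C` with `h ∘ f = g`; that is, `f` exhibits `B` as the free Boolean
algebra on the distributive lattice `D`. -/
theorem free_boolean_algebra_of_normal_form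
    {D B : Type*} [DistribLattice D] [BoundedOrder D] [BooleanAlgebra B]
    (f : BoundedLatticeHom D B) (hf : Function.Injective f)
    (hgen : ∀ x : B, ∃ (n : ℕ) (a b : Fin n → D),
      x = Finset.univ.sup fun i => f (a i) ⊓ (f (b i))ᶜ) :
    ∀ (C : Type*) [BooleanAlgebra C] (g : BoundedLatticeHom D C),
      ∃! h : BoundedLatticeHom B C, h.comp f = g := by
  classical
  intro C _ g
  have hsurj : Surjective (sdiffSup f.toLatticeHom) := fun x => by
    obtain ⟨n, a, b, rfl⟩ := hgen x
    exact ⟨univ.image fun i => (a i, b i), by simp [sdiffSup, sup_image, comp_def, sdiff_eq]⟩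
  let h := sdiffSupLiftHom hsurj hf g.toLatticeHom
  have hcomp (a : D) : h (f a) = g a :=
    sdiffSupLiftHom_apply_map hsurj hf _ (map_bot f) (map_bot g) a
  let H : BoundedLatticeHom B C :=
    { h with
      map_top' := by simpa [map_top] using hcomp ⊤
      map_bot' := by simpa [map_bot] using hcomp ⊥ }
  have hH : H.comp f = g := BoundedLatticeHom.ext hcomp
  exact ⟨H, hH, fun h' hh' =>
    BoundedLatticeHom.eq_of_comp_eq_of_surjective_sdiffSup hsurj (hh'.trans hH.symm)⟩
end
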